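/- arXiv:2505.04816 — 7 statements merged into one kernel-verified Lean document; each statement's English description precedes it below -/
import Mathlib

section
/- Let R be a commutative ring with an automorphism γ with γ² = id, and let ζ, τ ∈ R be elements fixed by γ such that R·s ∩ Rζ = (R·s)ζ, R·s ∩ Rτ = (R·s)τ, and (R/Rτ)·s ∩ (R/Rτ)ζ̄ = ((R/Rτ)·s)ζ̄, where s denotes the additive map a ↦ a - γ(a). Then R·s ∩ (Rτ + Rζ) = (Rτ + Rζ)·s. -/
/-- Let `R` be a commutative ring, `γ` an automorphism with `γ² = id`, and
`ζ, τ` fixed by `γ`; write `a·s = a - γ a`.  Assume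
`R·s ∩ Rζ = (R·s)ζ`, `R·s ∩ Rτ = (R·s)τ`, and the analogue of the first
identity modulo the (γ-stable) ideal `Rτ`, i.e. whenever `a - γ a ≡ cζ (mod Rτ)`
there are `b, t` with `a - γ a = (b - γ b)ζ + tτ`.  Then
`R·s ∩ (Rτ + Rζ) = (Rτ + Rζ)·s`. -/
theorem stmt7 (R : Type*) [CommRing R] (γ : R ≃+* R)
    (hγ2 : ∀ a, γ (γ a) = a) (ζ τ : R) (hζ : γ ζ = ζ) (hτ : γ τ = τ)
    (hRζ : ∀ a c : R, a - γ a = c * ζ → ∃ b : R, a - γ a = (b - γ b) * ζ)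
    (hRτ : ∀ a c : R, a - γ a = c * τ → ∃ b : R, a - γ a = (b - γ b) * τ)
    (hquot : ∀ a c : R, a - γ a - c * ζ ∈ Ideal.span {τ} →
      ∃ b t : R, a - γ a = (b - γ b) * ζ + t * τ) :
    {w : R | (∃ a, w = a - γ a) ∧ w ∈ Ideal.span {τ} + Ideal.span {ζ}} =
      {w : R | ∃ c d : R, w = (c - γ c) * τ + (d - γ d) * ζ} := by
  ext w
  simp only [Set.mem_setOf_eq]
  constructor
  · rintro ⟨⟨a, rfl⟩, hmem⟩
    obtain ⟨i, hi, j, hj, hij⟩ := Submodule.mem_sup.mp hmem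
    obtain ⟨x, rfl⟩ := Ideal.mem_span_singleton'.mp hi
    obtain ⟨y, rfl⟩ := Ideal.mem_span_singleton'.mp hj
    have hq : a - γ a - y * ζ ∈ Ideal.span {τ} := by
      rw [← hij]; simpa using hi
    obtain ⟨b, t, hbt⟩ := hquot a y hq
    set u := a - b * ζ with hu
    have hus : u - γ u = t * τ := by
      simp only [hu, map_sub, map_mul, hζ]
      ring_nf
      ring_nf at hbt
      linear_combination hbt
    obtain ⟨c, hc⟩ := hRτ u t hus
    exact ⟨c, b, by linear_combination hbt + hc - hus⟩
  · rintro ⟨c, d, rfl⟩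
    refine ⟨⟨c * τ + d * ζ, by simp [map_mul, hτ, hζ]; ring⟩, ?_⟩
    exact Submodule.add_mem_sup (Ideal.mem_span_singleton'.mpr ⟨c - γ c, rfl⟩)
      (Ideal.mem_span_singleton'.mpr ⟨d - γ d, rfl⟩)
end

section
/- Let G be a profinite group and M a profinite abelian G-module, with C = C_G(M) the kernel of the action. Suppose (1) pM + M(G-1) ≠ M, (2) the intersection over all g ∈ G \ C of the submodules M(g-1) is zero, and (3) for every nonzero a ∈ M, the stabilizer C_G(a) equals C. Then M is a pro-p group. -/
/-!
By (1) there is a proper open subgroup `W ⊇ pM + M(G-1)`. For a pro-`q` element `h ∈ G` with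
`q ≠ p` and `a₀ ∉ W`, the orbit sums `∑_{i<q^c} hⁱ • a₀ ≡ q^c • a₀` avoid `W` and are fixed by `h`
modulo arbitrarily small open subgroups, so by compactness `h` fixes a nonzero element and acts
trivially by (3). Hence every `g ∈ G` acts on each finite quotient `M/Ω` with order prime to `q`.

If a prime `q ≠ p` divided `[M : U]`, compactness would give a nonzero `a ∈ M` divisible by every
integer prime to `q`. Averaging over the powers of a nontrivially acting `g` writes `a`, modulo
any open `Ω`, as an element of `M(g-1)` plus a `g`-fixed element; if `a` were bounded away from
`M(g-1)`, these fixed parts would be bounded away from `0` and compactness would give a nonzero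
fixed point of `g`, contradicting (3). So `a` lies in every closure of `M(g-1)`, and (2) forces
`a = 0`.
-/

open Filter Topology

section Profinite

variable {M : Type*} [AddCommGroup M] [TopologicalSpace M] [IsTopologicalAddGroup M]
  [CompactSpace M]

theorem exists_isOpen_addSubgroup_subset [TotallyDisconnectedSpace M] {V : Set M}
    (hV : V ∈ 𝓝 0) : ∃ Ω : AddSubgroup M, IsOpen (Ω : Set M) ∧ (Ω : Set M) ⊆ V := by
  obtain ⟨U, hUV, hU, h0⟩ := mem_nhds_iff.mp hV
  obtain ⟨H, hHU⟩ := ProfiniteGrp.exist_openNormalAddSubgroup_sub_open_nhds_of_zero hU h0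
  exact ⟨H.toAddSubgroup, H.isOpen', hHU.trans hUV⟩

theorem mem_closure_of_forall_isOpen_addSubgroup [TotallyDisconnectedSpace M] {S : Set M} {a : M}
    (h : ∀ Ω : AddSubgroup M, IsOpen (Ω : Set M) → ∃ s ∈ S, s - a ∈ Ω) : a ∈ closure S := by
  refine mem_closure_iff_nhds.mpr fun t ht => ?_
  have hta : (· + a) ⁻¹' t ∈ 𝓝 (0 : M) :=
    (continuous_add_const a).continuousAt.preimage_mem_nhds (by rwa [zero_add])
  obtain ⟨Ω, hΩ, hΩt⟩ := exists_isOpen_addSubgroup_subset hta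
  obtain ⟨s, hs, hsa⟩ := h Ω hΩ
  exact ⟨s, by simpa using hΩt hsa, hs⟩

theorem exists_mem_eq_zero_of_forall_isOpen_addSubgroup [TotallyDisconnectedSpace M] [T2Space M]
    {X : Type*} [TopologicalSpace X] {K : Set X} (hK : IsCompact K) {f : X → M}
    (hf : Continuous f) (h : ∀ Ω : AddSubgroup M, IsOpen (Ω : Set M) → ∃ x ∈ K, f x ∈ Ω) :
    ∃ x ∈ K, f x = 0 := by
  have h0 : (0 : M) ∈ closure (f '' K) := mem_closure_of_forall_isOpen_addSubgroup fun Ω hΩ => by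
    obtain ⟨x, hx, hfx⟩ := h Ω hΩ
    exact ⟨f x, Set.mem_image_of_mem f hx, by simpa using hfx⟩
  rwa [(hK.image hf).isClosed.closure_eq] at h0

theorem exists_isOpen_le_notMem [TotallyDisconnectedSpace M] {N : AddSubgroup M}
    (hN : IsClosed (N : Set M)) {a : M} (ha : a ∉ N) :
    ∃ W : AddSubgroup M, IsOpen (W : Set M) ∧ N ≤ W ∧ a ∉ W := by
  have hN_eq : N = sInf {W : AddSubgroup M | IsOpen (W : Set M) ∧ N ≤ W} :=
    ProfiniteGrp.closedAddSubgroup_eq_sInf_open ⟨N, hN⟩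
  rw [hN_eq, AddSubgroup.mem_sInf] at ha
  push Not at ha
  obtain ⟨W, ⟨hW, hNW⟩, haW⟩ := ha
  exact ⟨W, hW, hNW, haW⟩

theorem exists_mk_eq_and_forall_coprime_exists_nsmul_eq [T2Space M] {q : ℕ}
    {U : AddSubgroup M} (hU : IsOpen (U : Set M)) {x : M ⧸ U} (hx : q • x = 0) :
    ∃ a : M, (a : M ⧸ U) = x ∧ ∀ k : ℕ, k.Coprime q → ∃ b, k • b = a := by
  have : DiscreteTopology (M ⧸ U) := QuotientAddGroup.discreteTopology hU
  let F : {k : ℕ // k.Coprime q} → Set M :=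
    fun k => (QuotientAddGroup.mk ⁻¹' {x}) ∩ Set.range (k.1 • · : M → M)
  have hF_closed : ∀ k, IsClosed (F k) := fun k =>
    ((isClosed_discrete {x}).preimage continuous_quot_mk).inter
      (isCompact_range (continuous_nsmul k.1)).isClosed
  have hF_nonempty : ∀ k, (F k).Nonempty := by
    intro ⟨k, hk⟩
    obtain ⟨u, w, huw⟩ := Nat.isCoprime_iff_coprime.mpr hk
    obtain ⟨b, hb⟩ := QuotientAddGroup.mk_surjective (u • x)
    refine ⟨k • b, ?_, b, rfl⟩
    change ((k • b : M) : M ⧸ U) = x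
    rw [QuotientAddGroup.mk_nsmul, hb]
    linear_combination (norm := module) huw • x - w • hx
  have hF_directed : Directed (· ⊇ ·) F := fun k l =>
    ⟨⟨k * l, k.2.mul_left l.2⟩,
      fun _ ⟨hy, b, hb⟩ => ⟨hy, l.1 • b, by dsimp only at hb ⊢; rwa [smul_smul]⟩,
      fun _ ⟨hy, b, hb⟩ => ⟨hy, k.1 • b, by dsimp only at hb ⊢; rwa [smul_smul, mul_comm]⟩⟩
  have : Nonempty {k : ℕ // k.Coprime q} := ⟨⟨1, Nat.coprime_one_left q⟩⟩
  obtain ⟨a, ha⟩ := IsCompact.nonempty_iInter_of_directed_nonempty_isCompact_isClosed F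
    hF_directed hF_nonempty (fun k => (hF_closed k).isCompact) hF_closed
  rw [Set.mem_iInter] at ha
  exact ⟨a, (ha ⟨1, Nat.coprime_one_left q⟩).1, fun k hk => (ha ⟨k, hk⟩).2⟩

theorem exists_pow_nsmul_mem {q : ℕ} (hq : q.Prime) {a : M}
    (ha : ∀ k : ℕ, k.Coprime q → ∃ b, k • b = a) {Ω : AddSubgroup M} (hΩ : IsOpen (Ω : Set M)) :
    ∃ v, q ^ v • a ∈ Ω := by
  have := Ω.quotient_finite_of_isOpen hΩ
  obtain ⟨b, rfl⟩ := ha _ (Nat.coprime_ordCompl hq Ω.index_ne_zero_of_finite).symm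
  refine ⟨Ω.index.factorization q, ?_⟩
  rw [smul_smul, Nat.ordProj_mul_ordCompl_eq_self]
  exact Ω.nsmul_index_mem b

end Profinite

theorem AddSubgroup.mem_of_nsmul_mem_of_coprime {M : Type*} [AddCommGroup M] {W : AddSubgroup M}
    {a : M} {m n : ℕ} (hm : m • a ∈ W) (hn : n • a ∈ W) (hmn : m.Coprime n) : a ∈ W := by
  obtain ⟨u, v, huv⟩ := Nat.isCoprime_iff_coprime.mpr hmn
  have ha : a = u • (m • a) + v • (n • a) := by
    linear_combination (norm := module) -huv • a
  rw [ha]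
  exact W.add_mem (W.zsmul_mem hm u) (W.zsmul_mem hn v)

section Action

variable {G M : Type*} [Group G] [AddCommGroup M] [DistribMulAction G M]

theorem smul_sum_pow_smul_sub (g : G) (a : M) (k : ℕ) :
    g • ∑ i ∈ Finset.range k, g ^ i • a - ∑ i ∈ Finset.range k, g ^ i • a = g ^ k • a - a := by
  have := Finset.sum_range_sub (fun i => g ^ i • a) k
  simp only [pow_succ', mul_smul, pow_zero, one_smul] at this
  rwa [Finset.smul_sum, ← Finset.sum_sub_distrib]

theorem pow_smul_sub_mem_closure (g : G) (a : M) (i : ℕ) :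
    g ^ i • a - a ∈ AddSubgroup.closure {w : M | ∃ b : M, w = g • b - b} :=
  AddSubgroup.subset_closure ⟨_, (smul_sum_pow_smul_sub g a i).symm⟩

theorem sum_pow_smul_sub_nsmul (g : G) (a : M) (k : ℕ) :
    ∑ i ∈ Finset.range k, g ^ i • a - k • a = ∑ i ∈ Finset.range k, (g ^ i • a - a) := by
  rw [Finset.sum_sub_distrib, Finset.sum_const, Finset.card_range]

/-- Averaging: `y = u • ∑_{i<k} gⁱ • a`, with `u` an inverse of `k` modulo `n`. -/
theorem exists_smul_sub_mem_and_sub_sub_mem {Ω : AddSubgroup M} {g : G} {a : M} {k n : ℕ}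
    (hk : g ^ k ∈ Ω.inertia G) (hn : n • a ∈ Ω) (hkn : k.Coprime n) :
    ∃ y, g • y - y ∈ Ω ∧
      ∃ s ∈ AddSubgroup.closure {w : M | ∃ b : M, w = g • b - b}, a - s - y ∈ Ω := by
  obtain ⟨u, v, huv⟩ := Nat.isCoprime_iff_coprime.mpr hkn
  set y := ∑ i ∈ Finset.range k, g ^ i • a
  refine ⟨u • y, ?_, -u • (y - k • a), ?_, ?_⟩
  · rw [smul_comm, ← smul_sub, smul_sum_pow_smul_sub]
    exact Ω.zsmul_mem (hk a) u
  · rw [sum_pow_smul_sub_nsmul]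
    exact AddSubgroup.zsmul_mem _
      (AddSubgroup.sum_mem _ fun i _ => pow_smul_sub_mem_closure g a i) _
  · have : a - -u • (y - k • a) - u • y = v • (n • a) := by
      linear_combination (norm := module) -huv • a
    rw [this]
    exact Ω.zsmul_mem hn v

end Action

section CompactGroup

variable {G : Type*} [Group G] [TopologicalSpace G] [IsTopologicalGroup G] [CompactSpace G]

open Nat in
/-- `h` is a cluster point of the powers `g ^ n'` where `n'` is `n !` with its `q`-part removed:
it plays the role of the `q`-primary component of `g` in the procyclic closure of `g`. -/
theorem exists_primaryComponent {q : ℕ} (hq : q.Prime) (g : G) :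
    ∃ h : G, ∀ K : Subgroup G, IsOpen (K : Set G) →
      (∃ c, h ^ q ^ c ∈ K) ∧ (h ∈ K → ∃ k, k.Coprime q ∧ g ^ k ∈ K) := by
  let u : ℕ → G := fun n => g ^ (n ! / q ^ (n !).factorization q)
  obtain ⟨h, hh⟩ : ∃ h, MapClusterPt h atTop u := exists_clusterPt_of_compactSpace _
  refine ⟨h, fun K hK => ⟨?_, fun hhK => ?_⟩⟩
  · have := K.quotient_finite_of_isOpen hK
    obtain ⟨m, hm, -, hgm⟩ := K.exists_pow_mem_of_index_ne_zero K.index_ne_zero_of_finite g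
    have hclosed : IsClosed {x : G | x ^ q ^ m.factorization q ∈ K} :=
      (K.isClosed_of_isOpen hK).preimage (continuous_pow _)
    refine ⟨_, hclosed.mem_of_mapClusterPt hh (eventually_atTop.mpr ⟨m, fun n hn => ?_⟩)⟩
    obtain ⟨t, ht⟩ : m ∣ (n ! / q ^ (n !).factorization q) * q ^ m.factorization q := by
      conv_lhs => rw [← Nat.ordProj_mul_ordCompl_eq_self m q]
      rw [mul_comm (n ! / _)]
      exact mul_dvd_mul_left _ (Nat.ordCompl_dvd_ordCompl_of_dvd (Nat.dvd_factorial hm hn) q)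
    change (g ^ _) ^ _ ∈ K
    rw [← pow_mul, ht, pow_mul]
    exact K.pow_mem hgm t
  · obtain ⟨n, hn⟩ := (hh.frequently (hK.mem_nhds hhK)).exists
    exact ⟨_, (Nat.coprime_ordCompl hq (factorial_ne_zero n)).symm, hn⟩

end CompactGroup

section ProfiniteModule

variable {G M : Type*} [Group G] [TopologicalSpace G] [AddCommGroup M] [TopologicalSpace M]
  [IsTopologicalAddGroup M] [CompactSpace M] [DistribMulAction G M] [ContinuousSMul G M]

theorem AddSubgroup.isOpen_inertia [IsTopologicalGroup G] {Ω : AddSubgroup M}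
    (hΩ : IsOpen (Ω : Set M)) :
    IsOpen (Ω.inertia G : Set G) := by
  refine Subgroup.isOpen_of_mem_nhds (g := 1) _ ?_
  have hcont : Continuous fun z : G × M => z.1 • z.2 - z.2 := continuous_smul.sub continuous_snd
  have := isCompact_univ.eventually_forall_of_forall_eventually (x₀ := (1 : G))
    (P := fun σ b => σ • b - b ∈ Ω) fun b _ =>
      hcont.continuousAt.preimage_mem_nhds (hΩ.mem_nhds (by simp))
  filter_upwards [this] with σ hσ b using hσ b trivial

variable [TotallyDisconnectedSpace M] [T2Space M]

theorem exists_notMem_smul_eq_self {g : G} {Ω₀ : AddSubgroup M} (hΩ₀ : IsOpen (Ω₀ : Set M))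
    (h : ∀ Ω : AddSubgroup M, IsOpen (Ω : Set M) → ∃ y ∉ Ω₀, g • y - y ∈ Ω) :
    ∃ y ∉ Ω₀, g • y = y := by
  obtain ⟨y, hy, hgy⟩ := exists_mem_eq_zero_of_forall_isOpen_addSubgroup
    hΩ₀.isClosed_compl.isCompact ((continuous_const_smul g).sub continuous_id) h
  exact ⟨y, hy, sub_eq_zero.mp hgy⟩

/-- The orbit sums `∑_{i<q^c} hⁱ • a₀ ≡ q^c • a₀ (mod W)` are approximate fixed points of `h`
outside `W`. -/
theorem exists_notMem_smul_eq_self_of_pow_mem_inertia {p q : ℕ} (hp : p.Prime) (hq : q.Prime)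
    (hqp : q ≠ p) {W : AddSubgroup M} (hW : IsOpen (W : Set M))
    (hWG : ∀ (g : G) (b : M), g • b - b ∈ W) (hWp : ∀ b : M, p • b ∈ W) {a₀ : M} (ha₀ : a₀ ∉ W)
    {h : G} (hh : ∀ Ω : AddSubgroup M, IsOpen (Ω : Set M) → ∃ c, h ^ q ^ c ∈ Ω.inertia G) :
    ∃ y ∉ W, h • y = y := by
  refine exists_notMem_smul_eq_self hW fun Ω hΩ => ?_
  obtain ⟨c, hc⟩ := hh Ω hΩ
  refine ⟨∑ i ∈ Finset.range (q ^ c), h ^ i • a₀, fun hy => ha₀ ?_, ?_⟩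
  · have hqa : q ^ c • a₀ ∈ W := by
      have := W.sub_mem hy (W.sum_mem (t := Finset.range (q ^ c)) fun i _ => hWG (h ^ i) a₀)
      rwa [← sum_pow_smul_sub_nsmul, sub_sub_cancel] at this
    exact W.mem_of_nsmul_mem_of_coprime hqa (hWp a₀)
      (Nat.Coprime.pow_left c ((Nat.coprime_primes hq hp).mpr hqp))
  · rw [smul_sum_pow_smul_sub]
    exact hc a₀

theorem exists_coprime_pow_mem_inertia [IsTopologicalGroup G] [CompactSpace G]
    (hfix : ∀ a : M, a ≠ 0 → ∀ g : G, g • a = a → ∀ b : M, g • b = b) {p q : ℕ} (hp : p.Prime)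
    (hq : q.Prime) (hqp : q ≠ p) {W : AddSubgroup M} (hW : IsOpen (W : Set M))
    (hWG : ∀ (g : G) (b : M), g • b - b ∈ W) (hWp : ∀ b : M, p • b ∈ W) {a₀ : M} (ha₀ : a₀ ∉ W)
    (g : G) {Ω : AddSubgroup M} (hΩ : IsOpen (Ω : Set M)) :
    ∃ k, k.Coprime q ∧ g ^ k ∈ Ω.inertia G := by
  obtain ⟨h, hh⟩ := exists_primaryComponent hq g
  obtain ⟨y, hyW, hy⟩ := exists_notMem_smul_eq_self_of_pow_mem_inertia hp hq hqp hW hWG hWp ha₀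
    fun Ω hΩ => (hh _ (AddSubgroup.isOpen_inertia hΩ)).1
  have hy0 : y ≠ 0 := fun h0 => hyW (h0 ▸ W.zero_mem)
  refine (hh _ (AddSubgroup.isOpen_inertia hΩ)).2 fun b => ?_
  rw [hfix y hy0 h hy b, sub_self]
  exact Ω.zero_mem

theorem mem_topologicalClosure_closure_smul_sub
    (hfix : ∀ a : M, a ≠ 0 → ∀ g : G, g • a = a → ∀ b : M, g • b = b) {q : ℕ} {a : M}
    (ha : ∀ Ω : AddSubgroup M, IsOpen (Ω : Set M) → ∃ v, q ^ v • a ∈ Ω) {g : G}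
    (hg : ∀ Ω : AddSubgroup M, IsOpen (Ω : Set M) → ∃ k, k.Coprime q ∧ g ^ k ∈ Ω.inertia G)
    (hg_ne : ∃ b : M, g • b ≠ b) :
    a ∈ (AddSubgroup.closure {w : M | ∃ b : M, w = g • b - b}).topologicalClosure := by
  obtain ⟨b, hb⟩ := hg_ne
  rw [← SetLike.mem_coe, AddSubgroup.topologicalClosure_coe]
  refine mem_closure_of_forall_isOpen_addSubgroup fun Ω₀ hΩ₀ => ?_
  by_contra! hfar
  suffices ∃ y ∉ Ω₀, g • y = y by
    obtain ⟨y, hy, hgy⟩ := this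
    exact hb (hfix y (fun h0 => hy (h0 ▸ Ω₀.zero_mem)) g hgy b)
  refine exists_notMem_smul_eq_self hΩ₀ fun Ω hΩ => ?_
  obtain ⟨v, hv⟩ := ha (Ω ⊓ Ω₀) (hΩ.inter hΩ₀)
  obtain ⟨k, hk, hgk⟩ := hg (Ω ⊓ Ω₀) (hΩ.inter hΩ₀)
  obtain ⟨y, hgy, s, hs, hasy⟩ := exists_smul_sub_mem_and_sub_sub_mem hgk hv (hk.pow_right v)
  refine ⟨y, fun hy => hfar s hs ?_, (AddSubgroup.mem_inf.mp hgy).1⟩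
  have : s - a = -((a - s - y) + y) := by abel
  rw [this]
  exact Ω₀.neg_mem (Ω₀.add_mem (AddSubgroup.mem_inf.mp hasy).2 hy)

end ProfiniteModule

theorem stmt8_general (p : ℕ) [Fact p.Prime]
    (G : Type*) [Group G] [TopologicalSpace G] [IsTopologicalGroup G]
    [CompactSpace G]
    (M : Type*) [AddCommGroup M] [TopologicalSpace M] [IsTopologicalAddGroup M]
    [CompactSpace M] [TotallyDisconnectedSpace M] [T2Space M]
    [DistribMulAction G M] [ContinuousSMul G M]
    (h1 : (AddSubgroup.closure
        {w : M | (∃ a : M, w = p • a) ∨ ∃ (g : G) (a : M), w = g • a - a}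
        ).topologicalClosure ≠ ⊤)
    (h2 : ∀ a : M,
      (∀ g : G, (∃ b : M, g • b ≠ b) →
        a ∈ (AddSubgroup.closure {w : M | ∃ b : M, w = g • b - b}
          ).topologicalClosure) → a = 0)
    (h3 : ∀ a : M, a ≠ 0 → ∀ g : G, g • a = a → ∀ b : M, g • b = b) :
    ∀ U : AddSubgroup M, IsOpen (U : Set M) →
      ∃ n : ℕ, Nat.card (M ⧸ U) = p ^ n := by
  intro U hU
  obtain ⟨a₀, ha₀⟩ := SetLike.exists_not_mem_of_ne_top _ h1 rfl
  obtain ⟨W, hW, hNW, ha₀W⟩ :=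
    exists_isOpen_le_notMem (AddSubgroup.isClosed_topologicalClosure _) ha₀
  have hW_mem {w : M} (hw : (∃ a : M, w = p • a) ∨ ∃ (g : G) (a : M), w = g • a - a) : w ∈ W :=
    hNW (AddSubgroup.le_topologicalClosure _ (AddSubgroup.subset_closure hw))
  have := AddSubgroup.quotient_finite_of_isOpen U hU
  refine ⟨_, Nat.eq_prime_pow_of_unique_prime_dvd Nat.card_pos.ne' fun {q} hq hqU => ?_⟩
  by_contra hqp
  have := Fact.mk hq
  obtain ⟨x, hx⟩ := exists_prime_addOrderOf_dvd_card' q hqU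
  obtain ⟨a, rfl, ha⟩ :=
    exists_mk_eq_and_forall_coprime_exists_nsmul_eq hU (hx ▸ addOrderOf_nsmul_eq_zero x)
  have ha0 : a = 0 := h2 a fun g hg => mem_topologicalClosure_closure_smul_sub h3
    (fun Ω hΩ => exists_pow_nsmul_mem hq ha hΩ)
    (fun Ω hΩ => exists_coprime_pow_mem_inertia h3 Fact.out hq hqp hW
      (fun g b => hW_mem (.inr ⟨g, b, rfl⟩)) (fun b => hW_mem (.inl ⟨b, rfl⟩)) ha₀W g hΩ) hg
  rw [ha0, QuotientAddGroup.mk_zero, addOrderOf_zero] at hx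
  exact hq.one_lt.ne hx

/-- Lemma 4.6 of [S]: let `G` be a profinite group acting continuously on a
profinite abelian group `M`, with `C = C_G(M)` the kernel of the action.
If (1) the closed subgroup `pM + M(G-1)` is proper, (2) the intersection of the
closed subgroups `M(g-1)` over `g ∈ G \ C` is zero, and (3) `C_G(a) = C` for
every nonzero `a ∈ M`, then `M` is a pro-`p` group (every open subgroup has
`p`-power index). -/
theorem stmt8 (p : ℕ) [Fact p.Prime]
    (G : Type*) [Group G] [TopologicalSpace G] [IsTopologicalGroup G]
    [CompactSpace G] [TotallyDisconnectedSpace G] [T2Space G]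
    (M : Type*) [AddCommGroup M] [TopologicalSpace M] [IsTopologicalAddGroup M]
    [CompactSpace M] [TotallyDisconnectedSpace M] [T2Space M]
    [DistribMulAction G M] [ContinuousSMul G M]
    (h1 : (AddSubgroup.closure
        {w : M | (∃ a : M, w = p • a) ∨ ∃ (g : G) (a : M), w = g • a - a}
        ).topologicalClosure ≠ ⊤)
    (h2 : ∀ a : M,
      (∀ g : G, (∃ b : M, g • b ≠ b) →
        a ∈ (AddSubgroup.closure {w : M | ∃ b : M, w = g • b - b}
          ).topologicalClosure) → a = 0)
    (h3 : ∀ a : M, a ≠ 0 → ∀ g : G, g • a = a → ∀ b : M, g • b = b) :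
    ∀ U : AddSubgroup M, IsOpen (U : Set M) →
      ∃ n : ℕ, Nat.card (M ⧸ U) = p ^ n :=
  stmt8_general p G M h1 h2 h3
end

section
/- Let G be a profinite group such that G/Z(G) is a pro-p group and Z(G) ⊆ G'. Then G is a pro-p group. -/
/-!
Let `N` be an open normal subgroup, `Q = G/N`, and `C ≤ Q` the image of `Z(G)`. Then `C` is
central, `Q/C` is a quotient of `G/Z(G)` by an open normal subgroup, hence a `p`-group, and
`C ≤ Q'` because `G'N` is open, hence closed, so it contains the closure of `G'`.
A Sylow `q`-subgroup `S` of `Q` with `q ≠ p` maps trivially to `Q/C`, so `S ≤ C` is central and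
Burnside's transfer `Q → S` is defined; its kernel contains `Q' ⊇ C ⊇ S` and meets `S`
trivially, so `S = 1`.
-/

open Subgroup

theorem Subgroup.map_center_le_center {G H : Type*} [Group G] [Group H] (f : G →* H)
    (hf : Function.Surjective f) : (center G).map f ≤ center H := by
  rintro _ ⟨z, hz, rfl⟩
  rw [mem_center_iff]
  intro h
  obtain ⟨g, rfl⟩ := hf h
  rw [← map_mul, ← map_mul, mem_center_iff.mp hz g]

theorem QuotientGroup.map_mk'_sup_self {G : Type*} [Group G] (H N : Subgroup G) [N.Normal] :
    (H ⊔ N).map (mk' N) = H.map (mk' N) := by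
  rw [Subgroup.map_sup, map_mk'_self, sup_bot_eq]

section FiniteGroup

variable {Q : Type*} [Group Q]

theorem IsPGroup.le_of_isPGroup_quotient {p q : ℕ} [Fact p.Prime] [Fact q.Prime] (hpq : p ≠ q)
    {C H : Subgroup Q} [C.Normal] (hQC : IsPGroup p (Q ⧸ C)) (hH : IsPGroup q H) : H ≤ C := by
  rw [← QuotientGroup.ker_mk' C, ← Subgroup.map_eq_bot_iff, ← disjoint_top]
  exact IsPGroup.disjoint_of_ne q p hpq.symm _ ⊤ (hH.map _) (hQC.to_subgroup ⊤)

theorem Sylow.eq_bot_of_le_center_of_le_commutator [Finite Q] {q : ℕ} [Fact q.Prime]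
    (S : Sylow q Q) (hSZ : (S : Subgroup Q) ≤ center Q)
    (hSQ' : (S : Subgroup Q) ≤ commutator Q) :
    (S : Subgroup Q) = ⊥ := by
  have hS : normalizer (S : Set Q) ≤ centralizer (S : Set Q) := by
    rw [centralizer_eq_top_iff_subset.mpr (show (S : Set Q) ⊆ center Q from hSZ)]
    exact le_top
  have : IsMulCommutative S := ⟨⟨fun a b => Subtype.ext (mem_center_iff.mp (hSZ b.2) a)⟩⟩
  have hQ'_le_ker : commutator Q ≤ (MonoidHom.transferSylow S hS).ker := by
    open scoped IsMulCommutative in exact Abelianization.commutator_subset_ker _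
  exact (MonoidHom.ker_transferSylow_disjoint S hS S S.2).symm.eq_bot_of_le
    (hSQ'.trans hQ'_le_ker)

theorem IsPGroup.of_quotient_of_le_center_of_le_commutator {p : ℕ} [Fact p.Prime] [Finite Q]
    {C : Subgroup Q} [C.Normal] (hCZ : C ≤ center Q) (hCQ' : C ≤ commutator Q)
    (hQC : IsPGroup p (Q ⧸ C)) : IsPGroup p Q := by
  refine IsPGroup.iff_card.mpr ⟨_, Nat.eq_prime_pow_of_unique_prime_dvd Nat.card_pos.ne'
    fun {q} hq hqQ => ?_⟩
  by_contra hpq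
  have : Fact q.Prime := ⟨hq⟩
  obtain ⟨g, hg⟩ := exists_prime_orderOf_dvd_card' q hqQ
  have hg_pGroup : IsPGroup q (zpowers g) := IsPGroup.of_card (n := 1) (by
    rw [Nat.card_zpowers, hg, pow_one])
  obtain ⟨S, hgS⟩ := hg_pGroup.exists_le_sylow
  have hSC : (S : Subgroup Q) ≤ C := hQC.le_of_isPGroup_quotient (Ne.symm hpq) S.2
  have hS_bot := S.eq_bot_of_le_center_of_le_commutator (hSC.trans hCZ) (hSC.trans hCQ')
  have hg1 : g = 1 := by
    simpa [hS_bot] using hgS (mem_zpowers g)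
  exact hq.ne_one (by rw [← hg, hg1, orderOf_one])

end FiniteGroup

section TopologicalGroup

variable {G : Type*} [Group G] [TopologicalSpace G] [IsTopologicalGroup G]

theorem Subgroup.topologicalClosure_le_sup_of_isOpen (H N : Subgroup G)
    (hN : IsOpen (N : Set G)) : H.topologicalClosure ≤ H ⊔ N :=
  H.topologicalClosure_minimal le_sup_left
    ((H ⊔ N).isClosed_of_isOpen (isOpen_mono le_sup_right hN))

theorem QuotientGroup.map_mk'_topologicalClosure_commutator_le (N : Subgroup G) [N.Normal]
    (hN : IsOpen (N : Set G)) :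
    (commutator G).topologicalClosure.map (mk' N) ≤ commutator (G ⧸ N) :=
  calc (commutator G).topologicalClosure.map (mk' N)
      ≤ (commutator G ⊔ N).map (mk' N) :=
        map_mono (topologicalClosure_le_sup_of_isOpen _ _ hN)
    _ = commutator (G ⧸ N) := by
      rw [map_mk'_sup_self, commutator_def, commutator_def, map_commutator,
        map_top_of_surjective _ (mk'_surjective N)]

theorem isPGroup_quotient_map_center_sup {p : ℕ}
    (hquot : ∀ N : Subgroup (G ⧸ center G), N.Normal → IsOpen (N : Set (G ⧸ center G)) →
      ∃ n : ℕ, Nat.card ((G ⧸ center G) ⧸ N) = p ^ n)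
    (N : Subgroup G) [N.Normal] (hN : IsOpen (N : Set G)) :
    IsPGroup p ((G ⧸ N) ⧸ (center G ⊔ N).map (QuotientGroup.mk' N)) := by
  have hM : IsOpen ((center G ⊔ N : Subgroup G) : Set G) := isOpen_mono le_sup_right hN
  obtain ⟨n, hn⟩ := hquot ((center G ⊔ N).map (QuotientGroup.mk' (center G))) inferInstance
    (by rw [coe_map]; exact QuotientGroup.isOpenMap_coe _ hM)
  refine IsPGroup.of_card (n := n) ?_
  rw [Nat.card_congr (QuotientGroup.quotientQuotientEquivQuotient N _ le_sup_right).toEquiv,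
    ← Nat.card_congr (QuotientGroup.quotientQuotientEquivQuotient _ _ le_sup_left).toEquiv, hn]

end TopologicalGroup

theorem stmt9_general (p : ℕ) [Fact p.Prime]
    (G : Type*) [Group G] [TopologicalSpace G] [IsTopologicalGroup G]
    [CompactSpace G]
    (hquot : ∀ N : Subgroup (G ⧸ Subgroup.center G), N.Normal →
      IsOpen (N : Set (G ⧸ Subgroup.center G)) →
      ∃ n : ℕ, Nat.card ((G ⧸ Subgroup.center G) ⧸ N) = p ^ n)
    (hZ : Subgroup.center G ≤ (commutator G).topologicalClosure) :
    ∀ N : Subgroup G, N.Normal → IsOpen (N : Set G) →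
      ∃ n : ℕ, Nat.card (G ⧸ N) = p ^ n := by
  intro N hN hNopen
  have : Finite (G ⧸ N) := N.quotient_finite_of_isOpen hNopen
  have hC := QuotientGroup.map_mk'_sup_self (center G) N
  have hCZ : (center G ⊔ N).map (QuotientGroup.mk' N) ≤ center (G ⧸ N) :=
    hC ▸ map_center_le_center _ (QuotientGroup.mk'_surjective N)
  have hCQ' : (center G ⊔ N).map (QuotientGroup.mk' N) ≤ commutator (G ⧸ N) :=
    hC ▸ (map_mono hZ).trans (QuotientGroup.map_mk'_topologicalClosure_commutator_le N hNopen)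
  exact ((isPGroup_quotient_map_center_sup hquot N hNopen).of_quotient_of_le_center_of_le_commutator
    hCZ hCQ').exists_card_eq

/-- If `G` is a profinite group such that `G/Z(G)` is a pro-`p` group and
`Z(G)` is contained in the closed derived subgroup `G'`, then `G` is a
pro-`p` group.  (Pro-`p`: every open normal subgroup has `p`-power index.) -/
theorem stmt9 (p : ℕ) [Fact p.Prime]
    (G : Type*) [Group G] [TopologicalSpace G] [IsTopologicalGroup G]
    [CompactSpace G] [TotallyDisconnectedSpace G] [T2Space G]
    (hquot : ∀ N : Subgroup (G ⧸ Subgroup.center G), N.Normal →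
      IsOpen (N : Set (G ⧸ Subgroup.center G)) →
      ∃ n : ℕ, Nat.card ((G ⧸ Subgroup.center G) ⧸ N) = p ^ n)
    (hZ : Subgroup.center G ≤ (commutator G).topologicalClosure) :
    ∀ N : Subgroup G, N.Normal → IsOpen (N : Set G) →
      ∃ n : ℕ, Nat.card (G ⧸ N) = p ^ n :=
  stmt9_general p G hquot hZ
end

section
/- Let Φ be a pro-p group topologically generated by elements x, y, let M be a closed central subgroup of the closed commutator subgroup Φ' with [M, x] and [M, y] well-defined closed subgroups, written additively. Suppose: (P1) the maps a ↦ [a,x] and a ↦ [a,y] on M are injective, and (P2) [M,x] ∩ [M,y] = [[M,x],y]. Let K ⊆ [M,x] + [M,y] be a closed subgroup normal in Φ such that the analogues of P1 and P2 hold modulo K. Then every element w = [a,x] + [b,y] ∈ K with a,b ∈ M lies in [K, Φ] = [K,x] + [K,y]; consequently K = [K,Φ], and since Φ is pro-p, K = 1. -/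
section CommutatorDecomposition

variable {M : Type*} [AddCommGroup M] (α β : M →+ M) (K : AddSubgroup M)

/-- Shifting `(a, b)` to `(a - β c, b + α c)` keeps `α a + β b` because `α` and `β` commute;
P2 modulo `K` provides a `c` with `α (a - β c) ∈ K`, and P1 modulo `K` pulls both summands
back into `K`. -/
theorem exists_mem_add_eq_of_add_mem (hcomm : ∀ a, α (β a) = β (α a))
    (P1αK : ∀ a, α a ∈ K → a ∈ K) (P1βK : ∀ a, β a ∈ K → a ∈ K)
    (P2K : ∀ a b, α a - β b ∈ K → ∃ c, α a - β (α c) ∈ K)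
    {a b : M} (hw : α a + β b ∈ K) :
    ∃ a' ∈ K, ∃ b' ∈ K, α a + β b = α a' + β b' := by
  obtain ⟨c, hc⟩ := P2K a (-b) (by rwa [map_neg, sub_neg_eq_add])
  have hshift : α a + β b = α (a - β c) + β (b + α c) := by
    simp only [map_sub, map_add, hcomm]
    abel
  have hαK : α (a - β c) ∈ K := by rwa [map_sub, hcomm]
  have hβK : β (b + α c) ∈ K := by
    have := K.sub_mem hw hαK
    rwa [hshift, add_sub_cancel_left] at this
  exact ⟨_, P1αK _ hαK, _, P1βK _ hβK, hshift⟩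

theorem add_mem_closure_image_union {a b : M} (ha : a ∈ K) (hb : b ∈ K) :
    α a + β b ∈ AddSubgroup.closure (α '' K ∪ β '' K) :=
  AddSubgroup.add_mem _ (AddSubgroup.subset_closure (Or.inl ⟨a, ha, rfl⟩))
    (AddSubgroup.subset_closure (Or.inr ⟨b, hb, rfl⟩))

theorem closure_image_union_le (hKα : ∀ k ∈ K, α k ∈ K) (hKβ : ∀ k ∈ K, β k ∈ K) :
    AddSubgroup.closure (α '' K ∪ β '' K) ≤ K := by
  rw [AddSubgroup.closure_le]
  rintro _ (⟨k, hk, rfl⟩ | ⟨k, hk, rfl⟩)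
  · exact hKα k hk
  · exact hKβ k hk

end CommutatorDecomposition

theorem stmt10_general (M : Type*) [AddCommGroup M] [TopologicalSpace M]
    [IsTopologicalAddGroup M]
    (α β : M →+ M)
    (hcomm : ∀ a, α (β a) = β (α a))
    (K : AddSubgroup M) (hKcl : IsClosed (K : Set M))
    (hKle : (K : Set M) ⊆ {w | ∃ a b, w = α a + β b})
    (hKα : ∀ k ∈ K, α k ∈ K) (hKβ : ∀ k ∈ K, β k ∈ K)
    (P1αK : ∀ a, α a ∈ K → a ∈ K) (P1βK : ∀ a, β a ∈ K → a ∈ K)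
    (P2K : ∀ a b, α a - β b ∈ K → ∃ c, α a - β (α c) ∈ K)
    (hpro : ∀ H : AddSubgroup M, IsClosed (H : Set M) →
      H = (AddSubgroup.closure (⇑α '' (H : Set M) ∪ ⇑β '' (H : Set M))
        ).topologicalClosure → H = ⊥) :
    (∀ a b : M, α a + β b ∈ K →
      α a + β b ∈ (AddSubgroup.closure (⇑α '' (K : Set M) ∪ ⇑β '' (K : Set M))
        ).topologicalClosure) ∧ K = ⊥ := by
  have hmem : ∀ a b : M, α a + β b ∈ K →
      α a + β b ∈ (AddSubgroup.closure (α '' K ∪ β '' K)).topologicalClosure := by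
    intro a b hw
    obtain ⟨a', ha', b', hb', hab⟩ :=
      exists_mem_add_eq_of_add_mem α β K hcomm P1αK P1βK P2K hw
    rw [hab]
    exact AddSubgroup.le_topologicalClosure _ (add_mem_closure_image_union α β K ha' hb')
  refine ⟨hmem, hpro K hKcl (le_antisymm ?_ ?_)⟩
  · intro k hk
    obtain ⟨a, b, rfl⟩ := hKle hk
    exact hmem a b hk
  · exact AddSubgroup.topologicalClosure_minimal _
      (closure_image_union_le α β K hKα hKβ) hKcl

/-- Abelianized form of the key computation in a `2`-generated pro-`p` group
`Φ = ⟨x,y⟩`: `M` is the (additively written) closed central subgroup of `Φ'`,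
and `α a = [a,x]`, `β a = [a,y]` are the commuting continuous additive
endomorphisms induced by conjugation.  Assume P1 (injectivity of `α, β`),
P2 (`[M,x] ∩ [M,y] = [[M,x],y]`), and let `K ≤ [M,x] + [M,y]` be a closed
`Φ`-invariant subgroup such that the analogues of P1, P2 hold modulo `K`.
Then every `w = [a,x] + [b,y] ∈ K` lies in `[K,Φ] = [K,x] + [K,y]`; hence
`K = [K,Φ]`, and since `Φ` is pro-`p` (a closed subgroup `H` of a pro-`p`
group with `H = [H,Φ]` is trivial), `K = 1`. -/
theorem stmt10 (M : Type*) [AddCommGroup M] [TopologicalSpace M]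
    [IsTopologicalAddGroup M]
    (α β : M →+ M) (hαc : Continuous α) (hβc : Continuous β)
    (hcomm : ∀ a, α (β a) = β (α a))
    (P1α : Function.Injective α) (P1β : Function.Injective β)
    (P2 : ∀ w : M, ((∃ a, w = α a) ∧ (∃ b, w = β b)) ↔ ∃ c, w = β (α c))
    (K : AddSubgroup M) (hKcl : IsClosed (K : Set M))
    (hKle : (K : Set M) ⊆ {w | ∃ a b, w = α a + β b})
    (hKα : ∀ k ∈ K, α k ∈ K) (hKβ : ∀ k ∈ K, β k ∈ K)
    (P1αK : ∀ a, α a ∈ K → a ∈ K) (P1βK : ∀ a, β a ∈ K → a ∈ K)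
    (P2K : ∀ a b, α a - β b ∈ K → ∃ c, α a - β (α c) ∈ K)
    (hpro : ∀ H : AddSubgroup M, IsClosed (H : Set M) →
      H = (AddSubgroup.closure (⇑α '' (H : Set M) ∪ ⇑β '' (H : Set M))
        ).topologicalClosure → H = ⊥) :
    (∀ a b : M, α a + β b ∈ K →
      α a + β b ∈ (AddSubgroup.closure (⇑α '' (K : Set M) ∪ ⇑β '' (K : Set M))
        ).topologicalClosure) ∧ K = ⊥ :=
  stmt10_general M α β hcomm K hKcl hKle hKα hKβ P1αK P1βK P2K hpro
end

section
/- Let M be a module over a commutative ring R with an action of a group X generated by x, y (acting R-linearly), written so that M(x-1) etc. are submodules. Suppose there is an injective additive map Θ : M → S into a commutative ring S, equivariant in the sense that (a·g)Θ = (aΘ)·ĝ for multiplication by a unit ĝ, with ẑ := x̂ satisfying: (i) SΘ-image condition M∩Sζ = M(x-1) where ζ = x̂ - 1, and (ii) Sζ ∩ Sτ = Sζτ with τ = ŷ - 1 and ζ, τ nonzerodivisors. Then M(x-1) ∩ M(y-1) = M(x-1)(y-1). -/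
/-- Let `M` be an abelian group with commuting injective endomorphisms
`α = ·(x-1)` and `β = ·(y-1)`, and `Θ : M → S` an injective additive map into
a commutative ring `S` with nonzerodivisors `ζ, τ`, satisfying
`Θ(aα) = Θ(a)ζ`, `Θ(aβ) = Θ(a)τ`, `Sζ ∩ Sτ = Sζτ`, and `MΘ ∩ Sζ = (Mα)Θ`.
Then `M(x-1) ∩ M(y-1) = M(x-1)(y-1)`: if `aα = bβ` there is `c` with
`a = cβ`, `b = cα`. -/
theorem stmt11 (M : Type*) [AddCommGroup M] (S : Type*) [CommRing S]
    (α β : M →+ M) (hcomm : ∀ a, α (β a) = β (α a))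
    (hαinj : Function.Injective α) (hβinj : Function.Injective β)
    (Θ : M →+ S) (hΘinj : Function.Injective Θ)
    (ζ τ : S)
    (hζnzd : ∀ s : S, s * ζ = 0 → s = 0) (hτnzd : ∀ s : S, s * τ = 0 → s = 0)
    (hΘα : ∀ a, Θ (α a) = Θ a * ζ) (hΘβ : ∀ a, Θ (β a) = Θ a * τ)
    (hζτ : ∀ u v : S, u * ζ = v * τ → ∃ w : S, u * ζ = w * (ζ * τ))
    (hMζ : ∀ a : M, (∃ s : S, Θ a = s * ζ) → ∃ c : M, a = α c) :
    (∀ a b : M, α a = β b → ∃ c : M, a = β c ∧ b = α c) ∧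
    {w : M | (∃ a, w = α a) ∧ ∃ b, w = β b} = {w : M | ∃ c, w = α (β c)} := by
  have key : ∀ a b : M, α a = β b → ∃ c : M, a = β c ∧ b = α c := by
    intro a b hab
    have h1 : Θ a * ζ = Θ b * τ := by rw [← hΘα, ← hΘβ, hab]
    obtain ⟨w, hw⟩ := hζτ (Θ a) (Θ b) h1
    have ha : Θ a = w * τ := by
      have h0 : (Θ a - w * τ) * ζ = 0 := by linear_combination hw
      exact sub_eq_zero.mp (hζnzd _ h0)
    have hb : Θ b = w * ζ := by
      have h0 : (Θ b - w * ζ) * τ = 0 := by linear_combination hw - h1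
      exact sub_eq_zero.mp (hτnzd _ h0)
    obtain ⟨c, hc⟩ := hMζ b ⟨w, hb⟩
    refine ⟨c, ?_, hc⟩
    apply hαinj
    rw [hab, hc, hcomm]
  refine ⟨key, ?_⟩
  ext m
  simp only [Set.mem_setOf_eq]
  constructor
  · rintro ⟨⟨a, rfl⟩, b, hb⟩
    obtain ⟨c, hc1, hc2⟩ := key a b hb
    exact ⟨c, by rw [hc1]⟩
  · rintro ⟨c, rfl⟩
    exact ⟨⟨β c, rfl⟩, α c, hcomm c⟩
end

section
/- Let G be a finite p-group generated by x and y, and N a normal subgroup. Then [N,G] = [N,x][N,y], where [N,g] denotes the subgroup generated by commutators [n,g], n ∈ N. -/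
open Pointwise
open scoped commutatorElement

namespace Stmt15Aux

variable {G : Type*} [Group G]

lemma comm_mul_right (a g h : G) :
    ⁅a, g * h⁆ = ⁅a, g⁆ * ⁅a, h⁆ * ⁅⁅a, h⁆⁻¹, g⁆ := by
  simp only [commutatorElement_def]; group

lemma comm_inv_right (a g : G) :
    ⁅a, g⁻¹⁆ = ⁅a, g⁆⁻¹ * ⁅⁅a, g⁆, g⁻¹⁆ := by
  simp only [commutatorElement_def]; group

lemma conj_comm_eq (m n g : G) :
    m * ⁅n, g⁆ * m⁻¹ = ⁅m * n, g⁆ * ⁅m, g⁆⁻¹ := by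
  simp only [commutatorElement_def]; group

lemma comm_mem_of_normal (N : Subgroup G) (hN : N.Normal) {n : G} (hn : n ∈ N) (g : G) :
    ⁅n, g⁆ ∈ N := by
  have : ⁅n, g⁆ = n * (g * n⁻¹ * g⁻¹) := by
    simp only [commutatorElement_def]; group
  rw [this]
  exact N.mul_mem hn (hN.conj_mem _ (N.inv_mem hn) g)

/-- Key lemma: modulo `⁅⁅P,⊤⁆,⊤⁆`, the map `g ↦ ⁅n,g⁆` is multiplicative, so all
commutators land in `A ⊔ B` up to the error term. -/
lemma key {x y : G} (hgen : Subgroup.closure {x, y} = ⊤)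
    (N P : Subgroup G) (hPN : P ≤ N) (A B : Subgroup G)
    (hA : ∀ n ∈ N, ⁅n, x⁆ ∈ A) (hB : ∀ n ∈ N, ⁅n, y⁆ ∈ B) :
    ⁅P, (⊤ : Subgroup G)⁆ ≤ A ⊔ B ⊔ ⁅⁅P, (⊤ : Subgroup G)⁆, (⊤ : Subgroup G)⁆ := by
  set T := A ⊔ B ⊔ ⁅⁅P, (⊤ : Subgroup G)⁆, (⊤ : Subgroup G)⁆ with hT
  have hAT : A ≤ T := le_sup_of_le_left le_sup_left
  have hBT : B ≤ T := le_sup_of_le_left le_sup_right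
  have hMT : ⁅⁅P, (⊤ : Subgroup G)⁆, (⊤ : Subgroup G)⁆ ≤ T := le_sup_right
  rw [Subgroup.commutator_le]
  intro n hn g _
  have hg : g ∈ Subgroup.closure ({x, y} : Set G) := by rw [hgen]; trivial
  induction hg using Subgroup.closure_induction with
  | mem z hz =>
    rcases hz with rfl | rfl
    · exact hAT (hA n (hPN hn))
    · exact hBT (hB n (hPN hn))
  | one => simpa using T.one_mem
  | mul g h hg hh ihg ihh =>
    rw [comm_mul_right]
    refine T.mul_mem (T.mul_mem (ihg trivial) (ihh trivial)) (hMT ?_)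
    exact Subgroup.commutator_mem_commutator
      ((⁅P, (⊤ : Subgroup G)⁆).inv_mem (Subgroup.commutator_mem_commutator hn trivial)) trivial
  | inv g hg ihg =>
    rw [comm_inv_right]
    refine T.mul_mem (T.inv_mem (ihg trivial)) (hMT ?_)
    exact Subgroup.commutator_mem_commutator
      (Subgroup.commutator_mem_commutator hn trivial) trivial

end Stmt15Aux

open Stmt15Aux

/-- Let `G` be a finite `p`-group generated by `x` and `y`, and `N ⊴ G`.
Then `[N,G] = [N,x]·[N,y]` (as sets), where `[N,g]` is the subgroup generated
by the commutators `[n,g]`, `n ∈ N`. -/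
theorem stmt15 (p : ℕ) [Fact p.Prime] (G : Type*) [Group G] [Finite G]
    (hp : IsPGroup p G) (x y : G) (hgen : Subgroup.closure {x, y} = ⊤)
    (N : Subgroup G) (hN : N.Normal) :
    ((⁅N, (⊤ : Subgroup G)⁆ : Subgroup G) : Set G) =
      (((Subgroup.closure {c : G | ∃ n ∈ N, c = ⁅n, x⁆} : Subgroup G) : Set G) *
        ((Subgroup.closure {c : G | ∃ n ∈ N, c = ⁅n, y⁆} : Subgroup G) : Set G)
        : Set G) := by
  haveI := hN
  set A := (Subgroup.closure {c : G | ∃ n ∈ N, c = ⁅n, x⁆} : Subgroup G) with hAdef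
  set B := (Subgroup.closure {c : G | ∃ n ∈ N, c = ⁅n, y⁆} : Subgroup G) with hBdef
  have hAmem : ∀ n ∈ N, ⁅n, x⁆ ∈ A := fun n hn => Subgroup.subset_closure ⟨n, hn, rfl⟩
  have hBmem : ∀ n ∈ N, ⁅n, y⁆ ∈ B := fun n hn => Subgroup.subset_closure ⟨n, hn, rfl⟩
  have hAN : A ≤ N := by
    rw [hAdef, Subgroup.closure_le]
    rintro c ⟨n, hn, rfl⟩
    exact comm_mem_of_normal N hN hn x
  have hBN : B ≤ N := by
    rw [hBdef, Subgroup.closure_le]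
    rintro c ⟨n, hn, rfl⟩
    exact comm_mem_of_normal N hN hn y
  -- the iterated commutator series
  let M : ℕ → Subgroup G := fun j =>
    Nat.rec ⁅N, (⊤ : Subgroup G)⁆ (fun _ Mj => ⁅Mj, (⊤ : Subgroup G)⁆) j
  have hM0 : M 0 = ⁅N, (⊤ : Subgroup G)⁆ := rfl
  have hMsucc : ∀ j, M (j + 1) = ⁅M j, (⊤ : Subgroup G)⁆ := fun _ => rfl
  have hMN : ∀ j, (M j).Normal ∧ M j ≤ N := by
    intro j
    induction j with
    | zero => exact ⟨Subgroup.commutator_normal N ⊤, Subgroup.commutator_le_left N ⊤⟩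
    | succ k ih =>
      exact ⟨@Subgroup.commutator_normal _ _ (M k) ⊤ ih.1 inferInstance,
        (@Subgroup.commutator_le_left _ _ (M k) ⊤ ih.1).trans ih.2⟩
  have hMγ : ∀ j, M j ≤ Subgroup.lowerCentralSeries (⊤ : Subgroup G) (j + 1) := by
    intro j
    induction j with
    | zero =>
      have h1 : Subgroup.lowerCentralSeries (⊤ : Subgroup G) 1 = ⁅(⊤ : Subgroup G), (⊤ : Subgroup G)⁆ := by
        rw [show Subgroup.lowerCentralSeries (⊤ : Subgroup G) 1 = ⁅Subgroup.lowerCentralSeries (⊤ : Subgroup G) 0, (⊤ : Subgroup G)⁆ from rfl,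
          Subgroup.lowerCentralSeries_zero]
      rw [hM0, h1]
      exact Subgroup.commutator_mono le_top le_rfl
    | succ k ih =>
      rw [hMsucc, show Subgroup.lowerCentralSeries (⊤ : Subgroup G) (k + 2) =
        ⁅Subgroup.lowerCentralSeries (⊤ : Subgroup G) (k + 1), (⊤ : Subgroup G)⁆ from rfl]
      exact Subgroup.commutator_mono ih le_rfl
  have hstep : ∀ j, M j ≤ A ⊔ B ⊔ M (j + 1) := by
    intro j
    cases j with
    | zero => exact key hgen N N le_rfl A B hAmem hBmem
    | succ k => exact key hgen N (M k) (hMN k).2 A B hAmem hBmem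
  have hchain : ∀ j, ⁅N, (⊤ : Subgroup G)⁆ ≤ A ⊔ B ⊔ M j := by
    intro j
    induction j with
    | zero => exact le_sup_right
    | succ k ih => exact ih.trans (sup_le le_sup_left (hstep k))
  haveI : Group.IsNilpotent G := hp.isNilpotent
  obtain ⟨c, hc⟩ := nilpotent_iff_lowerCentralSeries.mp this
  have hMc : M c = ⊥ := by
    have := (hMγ c).trans (lowerCentralSeries_antitone (⊤ : Subgroup G) (Nat.le_succ c))
    rw [hc] at this
    exact le_bot_iff.mp this
  have hHK : ⁅N, (⊤ : Subgroup G)⁆ = A ⊔ B := by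
    refine le_antisymm ?_ (sup_le ?_ ?_)
    · have := hchain c
      rwa [hMc, sup_bot_eq] at this
    · rw [hAdef, Subgroup.closure_le]
      rintro c ⟨n, hn, rfl⟩
      exact Subgroup.commutator_mem_commutator hn trivial
    · rw [hBdef, Subgroup.closure_le]
      rintro c ⟨n, hn, rfl⟩
      exact Subgroup.commutator_mem_commutator hn trivial
  -- A is normalized by N
  have hconjA : ∀ m ∈ N, ∀ a ∈ A, m * a * m⁻¹ ∈ A := by
    intro m hm a ha
    rw [hAdef] at ha
    induction ha using Subgroup.closure_induction with
    | mem z hz =>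
      obtain ⟨n, hn, rfl⟩ := hz
      rw [conj_comm_eq]
      exact A.mul_mem (hAmem _ (N.mul_mem hm hn)) (A.inv_mem (hAmem _ hm))
    | one => simpa using A.one_mem
    | mul g h hg hh ihg ihh =>
      have : m * (g * h) * m⁻¹ = (m * g * m⁻¹) * (m * h * m⁻¹) := by group
      rw [this]; exact A.mul_mem ihg ihh
    | inv g hg ihg =>
      have : m * g⁻¹ * m⁻¹ = (m * g * m⁻¹)⁻¹ := by group
      rw [this]; exact A.inv_mem ihg
  -- hence A * B is the subgroup A ⊔ B
  have hprod : ((A ⊔ B : Subgroup G) : Set G) = (A : Set G) * (B : Set G) := by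
    apply Set.Subset.antisymm
    · let P : Subgroup G :=
        { carrier := (A : Set G) * (B : Set G)
          one_mem' := ⟨1, A.one_mem, 1, B.one_mem, mul_one 1⟩
          mul_mem' := by
            rintro u v ⟨a1, ha1, b1, hb1, rfl⟩ ⟨a2, ha2, b2, hb2, rfl⟩
            refine ⟨a1 * (b1 * a2 * b1⁻¹), A.mul_mem ha1 (hconjA b1 (hBN hb1) a2 ha2),
              b1 * b2, B.mul_mem hb1 hb2, by group⟩
          inv_mem' := by
            rintro u ⟨a, ha, b, hb, rfl⟩
            refine ⟨b⁻¹ * a⁻¹ * b, by simpa using hconjA b⁻¹ (N.inv_mem (hBN hb)) a⁻¹ (A.inv_mem ha),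
              b⁻¹, B.inv_mem hb, by group⟩ }
      have : A ⊔ B ≤ P := by
        refine sup_le ?_ ?_
        · intro a ha; exact ⟨a, ha, 1, B.one_mem, mul_one a⟩
        · intro b hb; exact ⟨1, A.one_mem, b, hb, one_mul b⟩
      exact fun z hz => this hz
    · rintro z ⟨a, ha, b, hb, rfl⟩
      exact Subgroup.mul_mem _ (Subgroup.mem_sup_left ha) (Subgroup.mem_sup_right hb)
  rw [hHK, hprod]
end

section
/- Let S = ℤₚ[[X₁, X₂, X₃, X₄]] and for each j ∈ ℕ let γⱼ = (1+X₃)(1+X₄)ʲ - 1 ∈ S. Then the ideals Sγⱼ are pairwise distinct prime ideals, and consequently ∩ⱼ Sγⱼ = 0. -/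
/-!
The substitution `X₃ ↦ γⱼ` (other variables fixed) is an automorphism of `S`, inverted by
`X₃ ↦ (1 + X₃)(1 + X₄)⁻ʲ - 1`; it carries the prime `X₃` to `γⱼ`, so `γⱼ` is prime.
The substitution `X₃ ↦ (1 + X₄)⁻ⁱ - 1` kills `γᵢ` and sends `γⱼ` to `(1 + X₄)ʲ⁻ⁱ - 1 ≠ 0`,
so no `γᵢ` divides another `γⱼ`. An `f` divisible by all of them is then divisible by
`γ₀ ⋯ γₙ₋₁`, hence has order at least `n` for every `n`, so `f = 0`.
-/

open MvPowerSeries Function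

theorem prod_range_dvd_of_prime {M : Type*} [CommMonoidWithZero M] {q : ℕ → M}
    (hq : ∀ j, Prime (q j)) (hne : Pairwise fun i j => ¬ q i ∣ q j) {f : M}
    (hf : ∀ j, q j ∣ f) (n : ℕ) : ∏ j ∈ Finset.range n, q j ∣ f := by
  induction n with
  | zero => simp
  | succ n ih =>
    obtain ⟨g, rfl⟩ := ih
    have hg : q n ∣ g := by
      refine ((hq n).dvd_or_dvd (hf n)).resolve_left fun h => ?_
      obtain ⟨k, hk, hnk⟩ := ((hq n).dvd_finsetProd_iff _).mp h
      exact hne (Finset.mem_range.mp hk).ne' hnk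
    rw [Finset.prod_range_succ]
    exact mul_dvd_mul_left _ hg

namespace MvPowerSeries

variable {σ R : Type*} [CommRing R]

theorem X_prime [IsDomain R] (i : σ) : Prime (X i : MvPowerSeries σ R) := by
  classical
  have : IsDomain (MvPowerSeries {j // j ≠ i} R) := NoZeroDivisors.to_isDomain _
  let e := (renameEquiv R (Equiv.optionSubtypeNe i).symm).trans (optionEquivLeft {j // j ≠ i} R)
  have he : e (X i) = PowerSeries.X := by
    simp [e, renameEquiv, optionEquivLeft_X_none]
  rw [← MulEquiv.prime_iff e, he]
  exact PowerSeries.X_prime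

theorem isUnit_one_add_X (y : σ) : IsUnit (1 + X y : MvPowerSeries σ R) :=
  isUnit_iff_constantCoeff.mpr (by simp)

theorem coeff_single_one_add_X_pow (k : σ) (m : ℕ) :
    coeff (Finsupp.single k 1) ((1 + X k : MvPowerSeries σ R) ^ m) = m := by
  classical
  induction m with
  | zero => simp [coeff_one]
  | succ m ih =>
    rw [pow_succ, mul_add, mul_one, map_add, ih, X, coeff_mul_monomial, ← X]
    simp

theorem one_add_X_pow_injective [CharZero R] (k : σ) :
    Injective fun m : ℕ => (1 + X k : MvPowerSeries σ R) ^ m := fun m n h => by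
  have := congrArg (coeff (Finsupp.single k 1)) h
  simp only [coeff_single_one_add_X_pow] at this
  exact_mod_cast this

section SubstX

variable [DecidableEq σ] [Finite σ] (x : σ) {c : MvPowerSeries σ R}

theorem hasSubst_update_X (hc : constantCoeff c = 0) : HasSubst (update X x c) :=
  hasSubst_of_constantCoeff_zero fun s => by
    rcases eq_or_ne s x with rfl | hs <;> simp [*]

noncomputable def substX (hc : constantCoeff c = 0) :
    MvPowerSeries σ R →ₐ[R] MvPowerSeries σ R :=
  substAlgHom (hasSubst_update_X x hc)

variable {x}

theorem substX_X_self (hc : constantCoeff c = 0) : substX x hc (X x) = c := by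
  rw [substX, substAlgHom_X, update_self]

theorem substX_X_of_ne (hc : constantCoeff c = 0) {y : σ} (hyx : y ≠ x) :
    substX x hc (X y) = X y := by
  rw [substX, substAlgHom_X, update_of_ne hyx]

theorem substX_comp_substX {d : MvPowerSeries σ R} (hc : constantCoeff c = 0)
    (hd : constantCoeff d = 0) (h : substX x hc d = X x) :
    (substX x hc).comp (substX x hd) = AlgHom.id R _ := by
  ext1 f
  have hX : (fun s => substX x hc (update X x d s)) = X := by
    funext s
    rcases eq_or_ne s x with rfl | hs
    · rwa [update_self]
    · rw [update_of_ne hs, substX_X_of_ne hc hs]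
  rw [AlgHom.comp_apply, substX, substX, substAlgHom_comp_substAlgHom_apply, coe_substAlgHom]
  change subst (fun s => substX x hc (update X x d s)) f = f
  rw [hX, subst_self, id]

end SubstX

noncomputable def gamma (x y : σ) (j : ℕ) : MvPowerSeries σ R := (1 + X x) * (1 + X y) ^ j - 1

theorem constantCoeff_gamma (x y : σ) (j : ℕ) :
    constantCoeff (gamma x y j : MvPowerSeries σ R) = 0 := by
  simp [gamma]

section Gamma

variable [DecidableEq σ] [Finite σ] {x y : σ}

theorem substX_gamma {c : MvPowerSeries σ R} (hc : constantCoeff c = 0) (hxy : x ≠ y) (j : ℕ) :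
    substX x hc (gamma x y j) = (1 + c) * (1 + X y) ^ j - 1 := by
  simp [gamma, substX_X_self, substX_X_of_ne hc hxy.symm]

theorem substX_eq_self_of_mul_eq_one {c v : MvPowerSeries σ R} (hc : constantCoeff c = 0)
    (hxy : x ≠ y) {j : ℕ} (hv : (1 + X y) ^ j * v = 1) : substX x hc v = v := by
  have hmap : (1 + X y) ^ j * substX x hc v = 1 := by
    simpa [substX_X_of_ne hc hxy.symm] using congrArg (substX x hc) hv
  exact left_inv_eq_right_inv (by rwa [mul_comm]) hv

theorem prime_gamma [IsDomain R] (hxy : x ≠ y) (j : ℕ) :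
    Prime (gamma x y j : MvPowerSeries σ R) := by
  obtain ⟨v, hv⟩ := ((isUnit_one_add_X (R := R) y).pow j).exists_right_inv
  have hv0 : constantCoeff ((1 + X x) * v - 1) = 0 := by
    simpa [sub_eq_zero] using congrArg constantCoeff hv
  have hγ := constantCoeff_gamma (R := R) x y j
  -- the coordinate change `X x ↦ γⱼ` is inverted by `X x ↦ (1 + X x) (1 + X y)⁻ʲ - 1`
  let e : MvPowerSeries σ R ≃ₐ[R] MvPowerSeries σ R :=
    AlgEquiv.ofAlgHom (substX x hγ) (substX x hv0)
      (substX_comp_substX hγ hv0 (by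
        rw [map_sub, map_mul, substX_eq_self_of_mul_eq_one hγ hxy hv, map_add, map_one,
          substX_X_self, gamma]
        linear_combination (1 + X x) * hv))
      (substX_comp_substX hv0 hγ (by
        rw [substX_gamma hv0 hxy]
        linear_combination (1 + X x) * hv))
  have he : e (X x) = gamma x y j := substX_X_self hγ
  rw [← he, MulEquiv.prime_iff]
  exact X_prime x

theorem not_gamma_dvd_gamma [CharZero R] (hxy : x ≠ y) {i j : ℕ} (hij : i ≠ j) :
    ¬ gamma x y i ∣ (gamma x y j : MvPowerSeries σ R) := by
  intro hdvd
  obtain ⟨v, hv⟩ := ((isUnit_one_add_X (R := R) y).pow i).exists_right_inv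
  have hv0 : constantCoeff (v - 1) = 0 := by
    simpa [sub_eq_zero] using congrArg constantCoeff hv
  -- substituting `X x ↦ (1 + X y)⁻ⁱ - 1` kills `γᵢ`, hence also `γⱼ`
  have hkill : substX x hv0 (gamma x y i) = 0 := by
    rw [substX_gamma hv0 hxy]
    linear_combination hv
  have hvj : v * (1 + X y) ^ j = 1 := by
    have := map_dvd (substX x hv0) hdvd
    rw [hkill, zero_dvd_iff, substX_gamma hv0 hxy] at this
    linear_combination this
  exact hij (one_add_X_pow_injective y (left_inv_eq_right_inv hv hvj))

end Gamma

theorem eq_zero_of_forall_prod_dvd {q : ℕ → MvPowerSeries σ R}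
    (hq : ∀ j, constantCoeff (q j) = 0) {f : MvPowerSeries σ R}
    (hf : ∀ n, ∏ j ∈ Finset.range n, q j ∣ f) : f = 0 := by
  rw [← order_eq_top_iff]
  refine ENat.eq_top_iff_forall_ge.mpr fun n => ?_
  obtain ⟨g, rfl⟩ := hf n
  calc (n : ℕ∞) = ∑ j ∈ Finset.range n, 1 := by simp
    _ ≤ ∑ j ∈ Finset.range n, (q j).order :=
      Finset.sum_le_sum fun j _ => one_le_order_iff_constCoeff_eq_zero.mpr (hq j)
    _ ≤ (∏ j ∈ Finset.range n, q j).order := le_order_prod _ _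
    _ ≤ _ := le_self_add.trans le_order_mul

end MvPowerSeries

/-- In `S = ℤₚ[[X₁,X₂,X₃,X₄]]`, the elements `γⱼ = (1+X₃)(1+X₄)ʲ - 1`
generate pairwise distinct prime ideals, and consequently `⋂ⱼ Sγⱼ = 0`. -/
theorem stmt18 (p : ℕ) [Fact p.Prime]
    (γ : ℕ → MvPowerSeries (Fin 4) ℤ_[p])
    (hγ : ∀ j, γ j = (1 + MvPowerSeries.X 2) * (1 + MvPowerSeries.X 3) ^ j - 1) :
    (∀ j, (Ideal.span {γ j}).IsPrime) ∧
    (∀ i j, i ≠ j → Ideal.span {γ i} ≠ Ideal.span {γ j}) ∧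
    (⨅ j, Ideal.span {γ j}) = ⊥ := by
  obtain rfl : γ = gamma 2 3 := funext hγ
  have hprime (j : ℕ) : Prime (gamma 2 3 j : MvPowerSeries (Fin 4) ℤ_[p]) :=
    prime_gamma (by decide) j
  have hndvd : Pairwise fun i j =>
      ¬ (gamma 2 3 i ∣ (gamma 2 3 j : MvPowerSeries (Fin 4) ℤ_[p])) :=
    fun i j hij => not_gamma_dvd_gamma (by decide) hij
  refine ⟨fun j => (Ideal.span_singleton_prime (hprime j).ne_zero).mpr (hprime j),
    fun i j hij h => hndvd hij (Ideal.span_singleton_le_span_singleton.mp h.ge), ?_⟩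
  refine eq_bot_iff.mpr fun f hf => Ideal.mem_bot.mpr ?_
  have hdvd (j : ℕ) : gamma 2 3 j ∣ f :=
    Ideal.mem_span_singleton.mp (Ideal.mem_iInf.mp hf j)
  exact eq_zero_of_forall_prod_dvd (constantCoeff_gamma 2 3)
    (prod_range_dvd_of_prime hprime hndvd hdvd)
end
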